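/- arXiv:2207.09030 — 2 statements merged into one kernel-verified Lean document; each statement's English description precedes it below -/
import Mathlib

section
/- Fix p ≥ 1 and positive integers m ≤ n. Define m_1 = m and m_{i+1} = ⌊m_i / 2^p⌋, and let J_i(m,n) be the set of vectors u ∈ {0, ±(m/m_i)^{1/p}}^n with ∑|u_i|^p = m. Then for i ≠ j, any u ∈ J_i(m,n) and v ∈ J_j(m,n) satisfy d_p(u,v) ≥ m^{1/p}. -/
/-!
The layers sit at geometrically separated heights: since `m_j ≤ m_i / 2^p` for `i < j`, the
nonzero entries of a vector of `J_j` are at least twice as large as any entry of a vector of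
`J_i`. Hence `|u_k| ≤ |u_k - v_k|` coordinatewise for `u ∈ J_i`, `v ∈ J_j`, and summing `p`-th
powers gives `d_p(u, v)^p ≥ ∑ |u_k|^p = m`.
-/

noncomputable def lpDist (p : ℝ) {n : ℕ} (u v : Fin n → ℝ) : ℝ :=
  (∑ i, |u i - v i| ^ p) ^ (1/p)

/-- `mseq p m i` is `m_{i+1}` of the paper: `m_1 = m`, `m_{i+1} = ⌊m_i / 2^p⌋`. -/
noncomputable def mseq (p : ℝ) (m : ℕ) : ℕ → ℕ
  | 0 => m
  | i + 1 => ⌊(mseq p m i : ℝ) / 2 ^ p⌋₊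

/-- The layer `J_{i+1}(m, n)` of the paper (0-indexed in `i`). -/
noncomputable def Jset (p : ℝ) (n m i : ℕ) : Set (Fin n → ℝ) :=
  {u | (∀ k, u k = 0 ∨ |u k| = ((m : ℝ) / (mseq p m i : ℝ)) ^ (1/p)) ∧
    ∑ k, |u k| ^ p = (m : ℝ)}

open Real Finset

lemma abs_le_abs_sub_of_two_mul_le {x y a b : ℝ} (hx : |x| ≤ a) (hy : y = 0 ∨ |y| = b)
    (hab : 2 * a ≤ b) : |x| ≤ |x - y| := by
  rcases hy with rfl | hy
  · rw [sub_zero]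
  · have := abs_sub_abs_le_abs_sub y x
    rw [abs_sub_comm] at this
    linarith

lemma sum_abs_rpow_le_sum_abs_sub_rpow {ι : Type*} [Fintype ι] {p a b : ℝ} (hp : 0 ≤ p)
    {u v : ι → ℝ} (hu : ∀ k, |u k| ≤ a) (hv : ∀ k, v k = 0 ∨ |v k| = b) (hab : 2 * a ≤ b) :
    ∑ k, |u k| ^ p ≤ ∑ k, |u k - v k| ^ p :=
  sum_le_sum fun k _ =>
    rpow_le_rpow (abs_nonneg _) (abs_le_abs_sub_of_two_mul_le (hu k) (hv k) hab) hp

section mseq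

variable {p : ℝ} {m : ℕ}

lemma mseq_succ_le (i : ℕ) : (mseq p m (i + 1) : ℝ) ≤ mseq p m i / 2 ^ p :=
  Nat.floor_le (by positivity)

lemma mseq_antitone (hp : 0 ≤ p) : Antitone (mseq p m) := by
  refine antitone_nat_of_succ_le fun i => ?_
  have h2p : (1 : ℝ) ≤ 2 ^ p := one_le_rpow one_le_two hp
  have : (mseq p m (i + 1) : ℝ) ≤ mseq p m i :=
    (mseq_succ_le i).trans (div_le_self (Nat.cast_nonneg _) h2p)
  exact_mod_cast this

lemma mseq_mul_two_rpow_le (hp : 0 ≤ p) {i j : ℕ} (hij : i < j) :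
    (mseq p m j : ℝ) * 2 ^ p ≤ mseq p m i := by
  have hj : (mseq p m j : ℝ) ≤ mseq p m (i + 1) := by exact_mod_cast mseq_antitone hp hij
  rw [← le_div_iff₀ (by positivity)]
  exact hj.trans (mseq_succ_le i)

lemma two_mul_level_le (hp : 0 < p) {i j : ℕ} (hij : i < j) (hj : 0 < mseq p m j) :
    2 * ((m : ℝ) / mseq p m i) ^ (1 / p) ≤ ((m : ℝ) / mseq p m j) ^ (1 / p) := by
  have hratio : (m : ℝ) / mseq p m i ≤ 2 ^ (-p) * ((m : ℝ) / mseq p m j) := by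
    rw [rpow_neg zero_le_two, ← div_eq_inv_mul, div_div]
    exact div_le_div_of_nonneg_left (Nat.cast_nonneg _) (by positivity)
      (mseq_mul_two_rpow_le hp.le hij)
  calc 2 * ((m : ℝ) / mseq p m i) ^ (1 / p)
      ≤ 2 * (2 ^ (-p) * ((m : ℝ) / mseq p m j)) ^ (1 / p) := by gcongr
    _ = ((m : ℝ) / mseq p m j) ^ (1 / p) := by
      rw [mul_rpow (by positivity) (by positivity), ← rpow_mul zero_le_two,
        neg_mul, mul_one_div_cancel hp.ne', rpow_neg_one, ← mul_assoc,
        mul_inv_cancel₀ two_ne_zero, one_mul]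

end mseq

lemma abs_le_of_mem_Jset {p : ℝ} {n m i : ℕ} {u : Fin n → ℝ}
    (hu : u ∈ Jset p n m i) (k : Fin n) : |u k| ≤ ((m : ℝ) / mseq p m i) ^ (1 / p) := by
  rcases hu.1 k with h | h
  · rw [h, abs_zero]; positivity
  · exact h.le

lemma le_sum_abs_sub_rpow_of_mem_Jset {p : ℝ} (hp : 0 < p) {n m i j : ℕ} (hij : i < j)
    (hj : 0 < mseq p m j) {u v : Fin n → ℝ} (hu : u ∈ Jset p n m i) (hv : v ∈ Jset p n m j) :
    (m : ℝ) ≤ ∑ k, |u k - v k| ^ p :=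
  hu.2 ▸ sum_abs_rpow_le_sum_abs_sub_rpow hp.le (abs_le_of_mem_Jset hu) hv.1
    (two_mul_level_le hp hij hj)

theorem stmt3_general (p : ℝ) (hp : 1 ≤ p) (n m : ℕ)
    (i j : ℕ) (hij : i ≠ j) (hi : 0 < mseq p m i) (hj : 0 < mseq p m j)
    (u v : Fin n → ℝ) (hu : u ∈ Jset p n m i) (hv : v ∈ Jset p n m j) :
    (m : ℝ) ^ (1/p) ≤ lpDist p u v := by
  have hp0 : 0 < p := by linarith
  have hsum : (m : ℝ) ≤ ∑ k, |u k - v k| ^ p := by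
    rcases hij.lt_or_gt with h | h
    · exact le_sum_abs_sub_rpow_of_mem_Jset hp0 h hj hu hv
    · simpa only [abs_sub_comm] using le_sum_abs_sub_rpow_of_mem_Jset hp0 h hi hv hu
  exact rpow_le_rpow (Nat.cast_nonneg _) hsum (by positivity)

theorem stmt3 (p : ℝ) (hp : 1 ≤ p) (n m : ℕ) (hm : 0 < m) (hmn : m ≤ n)
    (i j : ℕ) (hij : i ≠ j) (hi : 0 < mseq p m i) (hj : 0 < mseq p m j)
    (u v : Fin n → ℝ) (hu : u ∈ Jset p n m i) (hv : v ∈ Jset p n m j) :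
    (m : ℝ) ^ (1/p) ≤ lpDist p u v :=
  stmt3_general p hp n m i j hij hi hj u v hu hv
end

section
/- Let α > 0, let J = {v ∈ {0, ±α}^n : v has exactly s nonzero coordinates}, let u ∈ J, and let m = s·α^p. Then the size of the open ℓ_p-ball of radius m^{1/p} around u within J, i.e. the number of v ∈ J with d_p(u,v)^p < m, is ∑_{(t,x): 2t + 2^p x < s} C(s,t) C(n−s,t) C(s−t,x) 2^t, where t counts the positions moved out of the support and x counts sign flips within the common support. -/
open Finset

namespace Stmt13
variable {n : ℕ}

def supp (σ : Fin n → SignType) : Finset (Fin n) := Finset.univ.filter (fun k => σ k ≠ 0)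

lemma mem_supp {σ : Fin n → SignType} {k : Fin n} : k ∈ supp σ ↔ σ k ≠ 0 := by
  simp [supp]

def flips (σu σ : Fin n → SignType) : Finset (Fin n) :=
  Finset.univ.filter (fun k => σ k = -σu k ∧ σ k ≠ 0)

lemma mem_flips {σu σ : Fin n → SignType} {k : Fin n} :
    k ∈ flips σu σ ↔ (σ k = -σu k ∧ σ k ≠ 0) := by simp [flips]

lemma sign_aux1 : ∀ a b : SignType, a ≠ 0 → b ≠ 0 → a ≠ -b → a = b := by decide

lemma sign_aux2 : ∀ a : SignType, a ≠ 0 → a ≠ -a := by decide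

lemma sign_aux3 : ∀ a : SignType, a ≠ 0 → a ≠ -1 → a = 1 := by decide

lemma sign_aux4 : ∀ a : SignType, a ≠ 0 → -a ≠ 0 := by decide

lemma fiberABX (σu : Fin n → SignType) (A B X : Finset (Fin n))
    (hA : A ⊆ supp σu) (hB : Disjoint B (supp σu)) (hX : X ⊆ supp σu \ A) :
    (Finset.univ.filter fun σ : Fin n → SignType =>
       supp σu \ supp σ = A ∧ supp σ \ supp σu = B ∧ flips σu σ = X).card
    = 2 ^ B.card := by
  classical
  rw [← Finset.card_powerset]
  have hBS : ∀ k ∈ B, k ∉ supp σu := fun k hk => Finset.disjoint_left.mp hB hk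
  apply Finset.card_bij' (i := fun σ _ => B.filter fun k => σ k = -1)
    (j := fun E _ => fun k => if k ∈ supp σu \ A then (if k ∈ X then -σu k else σu k)
        else if k ∈ B then (if k ∈ E then -1 else 1) else 0)
  · -- hi : image in powerset
    intro σ hσ
    exact Finset.mem_powerset.mpr (Finset.filter_subset _ _)
  · -- hj : reconstruct in fiber
    intro E hE
    have hE' : E ⊆ B := Finset.mem_powerset.mp hE
    set r : Fin n → SignType := fun k => if k ∈ supp σu \ A then (if k ∈ X then -σu k else σu k)
        else if k ∈ B then (if k ∈ E then -1 else 1) else 0 with hr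
    have hval : ∀ k, (k ∈ supp σu \ A ∧ r k = (if k ∈ X then -σu k else σu k))
        ∨ (k ∉ supp σu \ A ∧ k ∈ B ∧ r k = (if k ∈ E then -1 else 1))
        ∨ (k ∉ supp σu \ A ∧ k ∉ B ∧ r k = 0) := by
      intro k
      by_cases h1 : k ∈ supp σu \ A
      · exact Or.inl ⟨h1, if_pos h1⟩
      by_cases h2 : k ∈ B
      · exact Or.inr (Or.inl ⟨h1, h2, (if_neg h1).trans (if_pos h2)⟩)
      · exact Or.inr (Or.inr ⟨h1, h2, (if_neg h1).trans (if_neg h2)⟩)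
    have hsuppr : supp r = (supp σu \ A) ∪ B := by
      ext k
      rw [mem_supp, Finset.mem_union]
      rcases hval k with ⟨h1, h2⟩ | ⟨h1, h2, h3⟩ | ⟨h1, h2, h3⟩
      · have hk0 : σu k ≠ 0 := mem_supp.mp (Finset.mem_sdiff.mp h1).1
        constructor
        · intro _; exact Or.inl h1
        · intro _; rw [h2]; split
          · exact sign_aux4 _ hk0
          · exact hk0
      · constructor
        · intro _; exact Or.inr h2
        · intro _; rw [h3]; split <;> simp
      · rw [h3]; simp [h1, h2]
    refine Finset.mem_filter.mpr ⟨Finset.mem_univ _, ?_, ?_, ?_⟩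
    · -- supp σu \ supp r = A
      rw [hsuppr]
      ext k
      simp only [Finset.mem_sdiff, Finset.mem_union, not_or, Finset.mem_sdiff, not_and, not_not]
      constructor
      · rintro ⟨hkS, h1, h2⟩
        exact h1 hkS
      · intro hkA
        have hkS := hA hkA
        exact ⟨hkS, fun _ => hkA, fun hB' => hBS _ hB' hkS⟩
    · -- supp r \ supp σu = B
      rw [hsuppr]
      ext k
      simp only [Finset.mem_sdiff, Finset.mem_union, Finset.mem_sdiff]
      constructor
      · rintro ⟨h1 | h1, h2⟩
        · exact absurd h1.1 h2
        · exact h1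
      · intro hkB
        exact ⟨Or.inr hkB, hBS _ hkB⟩
    · -- flips σu r = X
      ext k
      rw [mem_flips]
      rcases hval k with ⟨h1, h2⟩ | ⟨h1, h2, h3⟩ | ⟨h1, h2, h3⟩
      · have hk0 : σu k ≠ 0 := mem_supp.mp (Finset.mem_sdiff.mp h1).1
        by_cases hkX : k ∈ X
        · simp only [hkX, if_pos] at h2
          simp [h2, hkX, hk0, sign_aux4 _ hk0]
        · simp only [hkX, if_neg, if_false] at h2
          simp only [hkX, iff_false, not_and]
          intro heq
          rw [h2] at heq
          exact absurd heq (sign_aux2 _ hk0)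
      · have hk0 : σu k = 0 := not_not.mp (fun h => hBS _ h2 (mem_supp.mpr h))
        constructor
        · rintro ⟨heq, -⟩
          rw [h3, hk0, neg_zero] at heq
          revert heq; split <;> simp
        · intro hkX; exact absurd (hX hkX) h1
      · simp only [h3]
        constructor
        · rintro ⟨-, h⟩; exact absurd rfl h
        · intro hkX; exact absurd (hX hkX) h1
  · -- left inverse
    intro σ hσ
    obtain ⟨-, hA', hB', hX'⟩ := Finset.mem_filter.mp hσ
    funext k
    by_cases h1 : k ∈ supp σu \ A
    · rw [if_pos h1]
      have hkT : k ∈ supp σ := by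
        by_contra hkT
        exact (Finset.mem_sdiff.mp h1).2 (hA' ▸ Finset.mem_sdiff.mpr ⟨(Finset.mem_sdiff.mp h1).1, hkT⟩)
      have hσk : σ k ≠ 0 := mem_supp.mp hkT
      have hσuk : σu k ≠ 0 := mem_supp.mp (Finset.mem_sdiff.mp h1).1
      by_cases hkX : k ∈ X
      · rw [if_pos hkX]
        rw [← hX'] at hkX
        exact (mem_flips.mp hkX).1.symm
      · rw [if_neg hkX]
        have hnot : ¬(σ k = -σu k) := fun h => hkX (hX' ▸ mem_flips.mpr ⟨h, hσk⟩)
        exact (sign_aux1 _ _ hσk hσuk hnot).symm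
    · rw [if_neg h1]
      by_cases h2 : k ∈ B
      · rw [if_pos h2]
        have hkT : k ∈ supp σ := (Finset.mem_sdiff.mp (hB' ▸ h2)).1
        have hσk : σ k ≠ 0 := mem_supp.mp hkT
        by_cases hneg : σ k = -1
        · rw [if_pos (Finset.mem_filter.mpr ⟨h2, hneg⟩), hneg]
        · have hnm : k ∉ Finset.filter (fun k => σ k = -1) B := fun h => hneg (Finset.mem_filter.mp h).2
          rw [if_neg hnm, sign_aux3 _ hσk hneg]
      · rw [if_neg h2]
        by_contra h
        have hkT : k ∈ supp σ := mem_supp.mpr (fun h' => h h'.symm)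
        by_cases hkS : k ∈ supp σu
        · exact h1 (Finset.mem_sdiff.mpr ⟨hkS, fun hkA => (Finset.mem_sdiff.mp (hA' ▸ hkA)).2 hkT⟩)
        · exact h2 (hB' ▸ Finset.mem_sdiff.mpr ⟨hkT, hkS⟩)
  · -- right inverse
    intro E hE
    have hE' : E ⊆ B := Finset.mem_powerset.mp hE
    ext k
    simp only [Finset.mem_filter]
    by_cases h2 : k ∈ B
    · have h1 : k ∉ supp σu \ A := fun h => hBS _ h2 (Finset.mem_sdiff.mp h).1
      rw [if_neg h1, if_pos h2]
      by_cases hkE : k ∈ E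
      · rw [if_pos hkE]; simp [h2, hkE]
      · rw [if_neg hkE]; simp only [h2, true_and, hkE, iff_false]; decide
    · simp only [h2, false_and, false_iff]
      exact fun h => h2 (hE' h)


lemma flips_subset (σu σ : Fin n → SignType) : flips σu σ ⊆ supp σu ∩ supp σ := by
  intro k hk
  obtain ⟨h1, h2⟩ := mem_flips.mp hk
  refine Finset.mem_inter.mpr ⟨mem_supp.mpr ?_, mem_supp.mpr h2⟩
  intro h0
  rw [h0, neg_zero] at h1
  exact h2 h1

lemma count_fiber (σu : Fin n → SignType) (s t x : ℕ) (hS : (supp σu).card = s) :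
    (Finset.univ.filter fun σ : Fin n → SignType =>
      (supp σ).card = s ∧ (supp σu \ supp σ).card = t ∧ (flips σu σ).card = x).card
    = s.choose t * ((n - s).choose t * ((s - t).choose x * 2 ^ t)) := by
  classical
  -- level 1 : key A = supp σu \ supp σ
  have key1 : ∀ σ ∈ (Finset.univ.filter fun σ : Fin n → SignType =>
      (supp σ).card = s ∧ (supp σu \ supp σ).card = t ∧ (flips σu σ).card = x),
      supp σu \ supp σ ∈ (supp σu).powersetCard t := by
    intro σ hσ
    obtain ⟨-, h1, h2, h3⟩ := Finset.mem_filter.mp hσ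
    exact Finset.mem_powersetCard.mpr ⟨Finset.sdiff_subset, h2⟩
  rw [Finset.card_eq_sum_card_fiberwise key1,
    Finset.sum_const_nat (m := (n - s).choose t * ((s - t).choose x * 2 ^ t)) ?_,
    Finset.card_powersetCard, hS]
  intro A hA
  obtain ⟨hAsub, hAcard⟩ := Finset.mem_powersetCard.mp hA
  have htles : t ≤ s := by
    rw [← hAcard, ← hS]; exact Finset.card_le_card hAsub
  rw [Finset.filter_filter]
  -- level 2 : key B = supp σ \ supp σu
  have key2 : ∀ σ ∈ (Finset.univ.filter fun σ : Fin n → SignType =>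
      ((supp σ).card = s ∧ (supp σu \ supp σ).card = t ∧ (flips σu σ).card = x)
        ∧ supp σu \ supp σ = A),
      supp σ \ supp σu ∈ (supp σu)ᶜ.powersetCard t := by
    intro σ hσ
    obtain ⟨-, ⟨h1, h2, h3⟩, h4⟩ := Finset.mem_filter.mp hσ
    refine Finset.mem_powersetCard.mpr ⟨?_, ?_⟩
    · intro k hk
      exact Finset.mem_compl.mpr (Finset.mem_sdiff.mp hk).2
    · have e1 : (supp σu \ supp σ).card + (supp σu ∩ supp σ).card = (supp σu).card :=
        Finset.card_sdiff_add_card_inter _ _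
      have e2 : (supp σ \ supp σu).card + (supp σ ∩ supp σu).card = (supp σ).card :=
        Finset.card_sdiff_add_card_inter _ _
      rw [Finset.inter_comm] at e2
      omega
  rw [Finset.card_eq_sum_card_fiberwise key2,
    Finset.sum_const_nat (m := (s - t).choose x * 2 ^ t) ?_,
    Finset.card_powersetCard, Finset.card_compl, Fintype.card_fin, hS]
  intro B hB
  obtain ⟨hBsub, hBcard⟩ := Finset.mem_powersetCard.mp hB
  have hBdisj : Disjoint B (supp σu) := by
    rw [Finset.disjoint_left]
    intro k hk hkS
    exact Finset.mem_compl.mp (hBsub hk) hkS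
  rw [Finset.filter_filter]
  -- level 3 : key X = flips
  have key3 : ∀ σ ∈ (Finset.univ.filter fun σ : Fin n → SignType =>
      (((supp σ).card = s ∧ (supp σu \ supp σ).card = t ∧ (flips σu σ).card = x)
        ∧ supp σu \ supp σ = A) ∧ supp σ \ supp σu = B),
      flips σu σ ∈ (supp σu \ A).powersetCard x := by
    intro σ hσ
    obtain ⟨-, ⟨⟨h1, h2, h3⟩, h4⟩, h5⟩ := Finset.mem_filter.mp hσ
    refine Finset.mem_powersetCard.mpr ⟨?_, h3⟩
    intro k hk
    have := flips_subset σu σ hk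
    rw [Finset.mem_inter] at this
    rw [← h4]
    exact Finset.mem_sdiff.mpr ⟨this.1, fun h => (Finset.mem_sdiff.mp h).2 this.2⟩
  rw [Finset.card_eq_sum_card_fiberwise key3,
    Finset.sum_const_nat (m := 2 ^ t) ?_,
    Finset.card_powersetCard, Finset.card_sdiff_of_subset hAsub, hS, hAcard]
  intro X hX
  obtain ⟨hXsub, hXcard⟩ := Finset.mem_powersetCard.mp hX
  rw [Finset.filter_filter]
  have hfe : (Finset.univ.filter fun σ : Fin n → SignType =>
      ((((supp σ).card = s ∧ (supp σu \ supp σ).card = t ∧ (flips σu σ).card = x)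
        ∧ supp σu \ supp σ = A) ∧ supp σ \ supp σu = B) ∧ flips σu σ = X)
      = (Finset.univ.filter fun σ : Fin n → SignType =>
        supp σu \ supp σ = A ∧ supp σ \ supp σu = B ∧ flips σu σ = X) := by
    apply Finset.filter_congr
    intro σ _
    constructor
    · rintro ⟨⟨⟨-, h4⟩, h5⟩, h6⟩
      exact ⟨h4, h5, h6⟩
    · rintro ⟨h4, h5, h6⟩
      have hST : supp σu ∩ supp σ = supp σu \ A := by rw [← h4]; exact (Finset.sdiff_sdiff_self_left _ _).symm
      have hcard : (supp σ).card = s := by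
        have e1 : (supp σ \ supp σu).card + (supp σ ∩ supp σu).card = (supp σ).card :=
          Finset.card_sdiff_add_card_inter _ _
        have e2 : (supp σu ∩ supp σ).card = s - t := by
          rw [hST, Finset.card_sdiff_of_subset hAsub, hS, hAcard]
        rw [Finset.inter_comm] at e2
        rw [h5, hBcard] at e1
        omega
      exact ⟨⟨⟨⟨hcard, by rw [h4, hAcard], by rw [h6, hXcard]⟩, h4⟩, h5⟩, h6⟩
  rw [hfe, fiberABX σu A B X hAsub hBdisj hXsub, hBcard]


lemma coe_eq_zero_iff : ∀ a : SignType, (a : ℝ) = 0 ↔ a = 0 := by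
  intro a; cases a <;> simp <;> norm_num


end Stmt13

open Stmt13 Finset

theorem stmt13 (p α : ℝ) (hp : 1 ≤ p) (hα : 0 < α) (n s : ℕ) (hs : 0 < s)
    (hsn : s ≤ n) (u : Fin n → ℝ) (hu : ∀ k, u k = 0 ∨ |u k| = α)
    (hsupp : (Finset.univ.filter fun k => u k ≠ 0).card = s) :
    Set.ncard {v : Fin n → ℝ | (∀ k, v k = 0 ∨ |v k| = α) ∧
        (Finset.univ.filter fun k => v k ≠ 0).card = s ∧
        ∑ k, |u k - v k| ^ p < (s : ℝ) * α ^ p}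
      = ∑ q ∈ Finset.range (s + 1) ×ˢ Finset.range (s + 1),
          if (2 * (q.1 : ℝ) + 2 ^ p * (q.2 : ℝ) < (s : ℝ)) then
            Nat.choose s q.1 * Nat.choose (n - s) q.1 * Nat.choose (s - q.1) q.2 * 2 ^ q.1
          else 0 := by
  classical
  have hppos : (0:ℝ) < p := lt_of_lt_of_le one_pos hp
  have hp0 : p ≠ 0 := ne_of_gt hppos
  have hαp : (0:ℝ) < α ^ p := Real.rpow_pos_of_pos hα p
  set φ : (Fin n → SignType) → (Fin n → ℝ) := fun σ k => (σ k : ℝ) * α with hφ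
  have hcast : ∀ a b : SignType, (a : ℝ) = (b : ℝ) → a = b := by
    intro a b; cases a <;> cases b <;> simp <;> norm_num
  have hφinj : Function.Injective φ := by
    intro σ τ h
    funext k
    exact hcast _ _ (mul_right_cancel₀ (ne_of_gt hα) (congrFun h k))
  have hrepr : ∀ v : Fin n → ℝ, (∀ k, v k = 0 ∨ |v k| = α) →
      φ (fun k => SignType.sign (v k)) = v := by
    intro v hv
    funext k
    rcases hv k with h | h
    · simp [hφ, h]
    · rcases (abs_eq hα.le).mp h with h' | h'
      · simp [hφ, h', sign_pos hα]
      · have hneg : v k < 0 := by rw [h']; linarith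
        rw [hφ]
        show (SignType.sign (v k) : ℝ) * α = v k
        rw [sign_neg hneg, h']
        simp
  set σu : Fin n → SignType := fun k => SignType.sign (u k) with hσu
  have hσuα : φ σu = u := hrepr u hu
  have hσu0 : ∀ k, (σu k = 0 ↔ u k = 0) := fun k => sign_eq_zero_iff
  have hSc : (supp σu).card = s := by
    rw [← hsupp]
    congr 1
    ext k
    simp only [mem_supp, Finset.mem_filter, Finset.mem_univ, true_and]
    exact not_congr (hσu0 k)
  -- the set as an image
  set P : (Fin n → ℝ) → Prop := fun v => (∀ k, v k = 0 ∨ |v k| = α) ∧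
      (Finset.univ.filter fun k => v k ≠ 0).card = s ∧
      ∑ k, |u k - v k| ^ p < (s : ℝ) * α ^ p with hP
  have hsub : {v | P v} ⊆ Set.range φ := by
    rintro v ⟨h1, -, -⟩
    exact ⟨fun k => SignType.sign (v k), hrepr v h1⟩
  have himg : {v | P v} = φ '' (φ ⁻¹' {v | P v}) := (Set.image_preimage_eq_iff.mpr hsub).symm
  rw [himg, Set.ncard_image_of_injective _ hφinj]
  have hpre : φ ⁻¹' {v | P v} = ↑(Finset.univ.filter fun σ => P (φ σ)) := by
    ext σ; simp
  rw [hpre, Set.ncard_coe_finset]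
  -- pointwise weight identity
  have hsupp_eq : ∀ σ : Fin n → SignType,
      (Finset.univ.filter fun k => φ σ k ≠ 0) = supp σ := by
    intro σ
    ext k
    simp only [Finset.mem_filter, Finset.mem_univ, true_and, mem_supp, hφ]
    rw [not_iff_not]
    constructor
    · intro h
      rcases mul_eq_zero.mp h with h' | h'
      · exact (coe_eq_zero_iff _).mp h'
      · exact absurd h' (ne_of_gt hα)
    · intro h; rw [h]; simp
  have hsum : ∀ σ : Fin n → SignType, ∑ k, |u k - φ σ k| ^ p =
      (((supp σu \ supp σ).card : ℝ) + ((supp σ \ supp σu).card : ℝ)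
        + 2 ^ p * ((flips σu σ).card : ℝ)) * α ^ p := by
    intro σ
    have hpt : ∀ k, |u k - φ σ k| ^ p =
        ((if k ∈ supp σu \ supp σ then (1:ℝ) else 0)
          + (if k ∈ supp σ \ supp σu then (1:ℝ) else 0)
          + (if k ∈ flips σu σ then (2:ℝ) ^ p else 0)) * α ^ p := by
      intro k
      rw [← congrFun hσuα k]
      have hfac : |φ σu k - φ σ k| ^ p = |(σu k : ℝ) - (σ k : ℝ)| ^ p * α ^ p := by
        rw [hφ]
        simp only
        rw [← sub_mul, abs_mul, abs_of_pos hα, Real.mul_rpow (abs_nonneg _) hα.le]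
      rw [hfac]
      congr 1
      simp only [Finset.mem_sdiff, mem_supp, mem_flips, not_not]
      rcases h1 : σu k <;> rcases h2 : σ k <;>
        simp [h1, h2, Real.zero_rpow hp0, Real.one_rpow] <;>
        norm_num [Real.zero_rpow hp0, Real.one_rpow, abs_of_nonneg]
    rw [Finset.sum_congr rfl (fun k _ => hpt k), ← Finset.sum_mul]
    congr 1
    rw [Finset.sum_add_distrib, Finset.sum_add_distrib]
    congr 1
    · congr 1
      · rw [Finset.sum_ite_mem, Finset.univ_inter, Finset.sum_const, nsmul_eq_mul, mul_one]
      · rw [Finset.sum_ite_mem, Finset.univ_inter, Finset.sum_const, nsmul_eq_mul, mul_one]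
    · rw [Finset.sum_ite_mem, Finset.univ_inter, Finset.sum_const, nsmul_eq_mul, mul_comm]
  -- rewrite the filter
  have hfilter : (Finset.univ.filter fun σ => P (φ σ))
      = (Finset.univ.filter fun σ : Fin n → SignType => (supp σ).card = s ∧
          (((supp σu \ supp σ).card : ℝ) + ((supp σ \ supp σu).card : ℝ)
            + 2 ^ p * ((flips σu σ).card : ℝ)) < s) := by
    apply Finset.filter_congr
    intro σ _
    constructor
    · rintro ⟨-, h2, h3⟩
      refine ⟨by rwa [hsupp_eq σ] at h2, ?_⟩
      rw [hsum σ] at h3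
      exact lt_of_mul_lt_mul_right (by linarith [h3]) hαp.le
    · rintro ⟨h2, h3⟩
      refine ⟨?_, by rwa [hsupp_eq σ], ?_⟩
      · intro k
        rcases h1 : σ k
        · left; simp [hφ, h1]
        · right; simp [hφ, h1, abs_of_pos hα]
        · right; simp [hφ, h1, abs_of_pos hα]
      · rw [hsum σ]
        exact (mul_lt_mul_of_pos_right h3 hαp) |>.trans_le (le_of_eq rfl)
  rw [hfilter]
  -- symmetric cardinality fact
  have hsymm : ∀ σ : Fin n → SignType, (supp σ).card = s →
      (supp σ \ supp σu).card = (supp σu \ supp σ).card := by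
    intro σ h
    have e1 := Finset.card_sdiff_add_card_inter (supp σu) (supp σ)
    have e2 := Finset.card_sdiff_add_card_inter (supp σ) (supp σu)
    rw [Finset.inter_comm] at e2
    omega
  -- fiberwise over (t, x)
  have hkey : ∀ σ ∈ (Finset.univ.filter fun σ : Fin n → SignType => (supp σ).card = s ∧
        (((supp σu \ supp σ).card : ℝ) + ((supp σ \ supp σu).card : ℝ)
          + 2 ^ p * ((flips σu σ).card : ℝ)) < s),
      ((supp σu \ supp σ).card, (flips σu σ).card)
        ∈ Finset.range (s + 1) ×ˢ Finset.range (s + 1) := by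
    intro σ hσ
    rw [Finset.mem_product, Finset.mem_range, Finset.mem_range]
    constructor
    · have : (supp σu \ supp σ).card ≤ (supp σu).card :=
        Finset.card_le_card Finset.sdiff_subset
      omega
    · have h1 : flips σu σ ⊆ supp σu := (flips_subset σu σ).trans Finset.inter_subset_left
      have : (flips σu σ).card ≤ (supp σu).card := Finset.card_le_card h1
      omega
  rw [Finset.card_eq_sum_card_fiberwise hkey]
  apply Finset.sum_congr rfl
  rintro ⟨t, x⟩ hq
  simp only
  rw [Finset.filter_filter]
  split_ifs with hcond
  · have heq : (Finset.univ.filter fun σ : Fin n → SignType =>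
        ((supp σ).card = s ∧
          (((supp σu \ supp σ).card : ℝ) + ((supp σ \ supp σu).card : ℝ)
            + 2 ^ p * ((flips σu σ).card : ℝ)) < s)
          ∧ ((supp σu \ supp σ).card, (flips σu σ).card) = (t, x))
        = (Finset.univ.filter fun σ : Fin n → SignType =>
          (supp σ).card = s ∧ (supp σu \ supp σ).card = t ∧ (flips σu σ).card = x) := by
      apply Finset.filter_congr
      intro σ _
      simp only [eq_iff_iff, Prod.mk.injEq]
      constructor
      · rintro ⟨⟨hc, -⟩, h1, h2⟩
        exact ⟨hc, h1, h2⟩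
      · rintro ⟨hc, h1, h2⟩
        refine ⟨⟨hc, ?_⟩, h1, h2⟩
        have ht' := hsymm σ hc
        rw [h1, h2, ht', h1]
        push_cast
        linarith
    rw [heq, count_fiber σu s t x hSc]
    ring
  · rw [Finset.card_eq_zero, Finset.filter_eq_empty_iff]
    rintro σ - ⟨⟨hc, hineq⟩, hkeyeq⟩
    apply hcond
    have h1 : (supp σu \ supp σ).card = t := congrArg Prod.fst hkeyeq
    have h2 : (flips σu σ).card = x := congrArg Prod.snd hkeyeq
    have ht' := hsymm σ hc
    rw [ht', h1, h2] at hineq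
    linarith
end
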